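/- In a CD neighborhood graph with K = ∅, degout(v) ≥ 1 and degin(v) ≥ 1, the no-k normalized betweenness B^nk(v) = B(v)/(degout(v)·degin(v)) satisfies B^nk(v) = 1 − (Σ_{j ∈ J} (degout(j) − 1)) / (degout(v)·degin(v)). -/

import Mathlib

open Finset

variable {V : Type*}

/-- `l` is a directed path from `s` to `t` in the directed graph with adjacency
relation `adj`: consecutive vertices are joined by edges, it starts at `s`,
ends at `t`, and has no repeated vertices. -/
def IsDirPath (adj : V → V → Prop) (s t : V) (l : List V) : Prop :=
  l.Chain' adj ∧ l.head? = some s ∧ l.getLast? = some t ∧ l.Nodup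

/-- `l` is a shortest directed path from `s` to `t`. -/
def IsShortestDirPath (adj : V → V → Prop) (s t : V) (l : List V) : Prop :=
  IsDirPath adj s t l ∧ ∀ l', IsDirPath adj s t l' → l.length ≤ l'.length

/-- `x` occurs as an interior vertex of the list `l` (i.e. `x` is a member of `l`
which is neither the first nor the last entry). -/
def ListInterior (l : List V) (x : V) : Prop := x ∈ l.tail.dropLast

/-- `σ(s,t)`: the number of shortest directed paths from `s` to `t`. -/
noncomputable def numShortest (adj : V → V → Prop) (s t : V) : ℕ :=
  {l : List V | IsShortestDirPath adj s t l}.ncard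

/-- `σ(s,t∣x)`: the number of shortest directed paths from `s` to `t` that pass
through `x` as an interior vertex. -/
noncomputable def numShortestThrough (adj : V → V → Prop) (s t x : V) : ℕ :=
  {l : List V | IsShortestDirPath adj s t l ∧ ListInterior l x}.ncard

/-- A CD Index neighborhood graph: a directed graph whose vertex set is the
disjoint union `{v} ∪ I ∪ J ∪ K ∪ T` of the focal vertex `v` and four pairwise
disjoint finite sets, with the edge structure of the CD Index neighborhood. -/
structure CDGraph (V : Type*) where
  /-- the adjacency relation: `adj u w` means there is a directed edge `u → w` -/
  adj : V → V → Prop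
  /-- the focal vertex -/
  v : V
  /-- the set of `I`-type vertices -/
  I : Finset V
  /-- the set of `J`-type vertices -/
  J : Finset V
  /-- the set of `K`-type vertices -/
  K : Finset V
  /-- the set of vertices cited by `v` -/
  T : Finset V
  v_not_I : v ∉ I
  v_not_J : v ∉ J
  v_not_K : v ∉ K
  v_not_T : v ∉ T
  disj_IJ : Disjoint I J
  disj_IK : Disjoint I K
  disj_IT : Disjoint I T
  disj_JK : Disjoint J K
  disj_JT : Disjoint J T
  disj_KT : Disjoint K T
  /-- every vertex is `v` or belongs to one of `I`, `J`, `K`, `T` -/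
  cover : ∀ x : V, x = v ∨ x ∈ I ∨ x ∈ J ∨ x ∈ K ∨ x ∈ T
  /-- `v` has an out-edge to each element of `T` and no other out-edges -/
  v_out : ∀ w, adj v w ↔ w ∈ T
  /-- each `i ∈ I` has exactly one out-edge, namely to `v` -/
  I_out : ∀ i ∈ I, ∀ w, adj i w ↔ w = v
  /-- each `j ∈ J` has an out-edge to `v` -/
  J_cites_v : ∀ j ∈ J, adj j v
  /-- each `j ∈ J` has at least one out-edge into `T` -/
  J_cites_T : ∀ j ∈ J, ∃ t ∈ T, adj j t
  /-- every out-edge of `j ∈ J` goes to `{v} ∪ T` -/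
  J_out : ∀ j ∈ J, ∀ w, adj j w → w = v ∨ w ∈ T
  /-- each `k ∈ K` has at least one out-edge -/
  K_cites : ∀ k ∈ K, ∃ w, adj k w
  /-- every out-edge of `k ∈ K` goes into `T` -/
  K_out : ∀ k ∈ K, ∀ w, adj k w → w ∈ T
  /-- vertices in `T` have no out-edges -/
  T_out : ∀ t ∈ T, ∀ w, ¬ adj t w

/-- The out-degree of a vertex `u`: the number of out-neighbors of `u`. -/
noncomputable def CDGraph.degout (G : CDGraph V) (u : V) : ℕ :=
  {w | G.adj u w}.ncard

/-- The in-degree of the focal vertex `v`, namely `n_I + n_J`. -/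
def CDGraph.degin (G : CDGraph V) : ℕ := G.I.card + G.J.card

/-- The raw betweenness of the focal vertex `v`:
`B(v) = Σ_{s ≠ v} Σ_{t ≠ v} σ(s,t∣v)/σ(s,t)`, where terms with `σ(s,t) = 0`
count as `0` (division by zero in `ℝ` yields `0`). -/
noncomputable def CDGraph.B [Fintype V] [DecidableEq V] (G : CDGraph V) : ℝ :=
  ∑ s ∈ univ.erase G.v, ∑ t ∈ univ.erase G.v,
    (numShortestThrough G.adj s t G.v : ℝ) / (numShortest G.adj s t : ℝ)

/-!
Nothing points into `I ∪ J ∪ K` and `T` is a sink, so the middle vertex of a directed path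
`a → b → c` is `v`; hence every directed path has at most three vertices, and a path through `v`
is `s → v → t` with `s ∈ I ∪ J` and `t ∈ T`. It is the unique shortest `s`–`t` path unless `s`
cites `t` directly, and then it is not shortest. So `B(v)` counts the pairs `(s, t) ∈ (I ∪ J) × T`
with `s` not citing `t`; each `s ∈ I ∪ J` cites `v` and `degout s - 1` vertices of `T`.
-/

section DirPath

variable {adj : V → V → Prop} {s t x : V}

lemma isDirPath_pair (h : adj s t) (hst : s ≠ t) : IsDirPath adj s t [s, t] :=
  ⟨List.isChain_pair.2 h, rfl, rfl, by simp [hst]⟩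

lemma setOf_isShortestDirPath_eq_singleton {l₀ : List V}
    (h : ∀ l, IsDirPath adj s t l ↔ l = l₀) : {l | IsShortestDirPath adj s t l} = {l₀} := by
  ext l
  simp only [IsShortestDirPath, h, Set.mem_ofPred_eq, Set.mem_singleton_iff, forall_eq,
    and_iff_left_iff_imp]
  rintro rfl
  exact le_rfl

lemma numShortestThrough_eq_numShortest
    (h : ∀ l, IsShortestDirPath adj s t l → ListInterior l x) :
    numShortestThrough adj s t x = numShortest adj s t := by
  unfold numShortestThrough numShortest
  congr 1
  ext l
  exact and_iff_left_of_imp (h l)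

lemma numShortestThrough_eq_zero
    (h : ∀ l, IsShortestDirPath adj s t l → ¬ ListInterior l x) :
    numShortestThrough adj s t x = 0 := by
  have : {l | IsShortestDirPath adj s t l ∧ ListInterior l x} = ∅ :=
    Set.eq_empty_of_forall_notMem fun l hl => h l hl.1 hl.2
  rw [numShortestThrough, this, Set.ncard_empty]

end DirPath

namespace CDGraph

variable (G : CDGraph V) {s t u w x : V}

lemma eq_v_or_mem_T_of_adj (h : G.adj u w) : w = G.v ∨ w ∈ G.T := by
  rcases G.cover u with rfl | hu | hu | hu | hu
  · exact Or.inr ((G.v_out w).1 h)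
  · exact Or.inl ((G.I_out u hu w).1 h)
  · exact G.J_out u hu w h
  · exact Or.inr (G.K_out u hu w h)
  · exact (G.T_out u hu w h).elim

lemma eq_v_of_adj_of_adj (h₁ : G.adj u w) (h₂ : G.adj w x) : w = G.v :=
  (G.eq_v_or_mem_T_of_adj h₁).resolve_right fun hw => G.T_out w hw x h₂

lemma not_adj_v_v : ¬ G.adj G.v G.v := fun h => G.v_not_T ((G.v_out G.v).1 h)

lemma adj_v_iff : G.adj u G.v ↔ u ∈ G.I ∨ u ∈ G.J := by
  constructor
  · intro h
    rcases G.cover u with rfl | hu | hu | hu | hu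
    · exact absurd h G.not_adj_v_v
    · exact Or.inl hu
    · exact Or.inr hu
    · exact absurd (G.K_out u hu _ h) G.v_not_T
    · exact absurd h (G.T_out u hu _)
  · rintro (hu | hu)
    · exact (G.I_out u hu _).2 rfl
    · exact G.J_cites_v u hu

lemma ne_of_mem_T (hs : s ∈ G.I ∨ s ∈ G.J) (ht : t ∈ G.T) : s ≠ t := by
  rintro rfl
  rcases hs with hs | hs
  · exact disjoint_left.1 G.disj_IT hs ht
  · exact disjoint_left.1 G.disj_JT hs ht

lemma isDirPath_cases {l : List V} (h : IsDirPath G.adj s t l) :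
    l = [s] ∨ l = [s, t] ∨ l = [s, G.v, t] := by
  obtain ⟨hc, hs, ht, -⟩ := h
  replace hc : l.IsChain G.adj := hc
  rcases l with _ | ⟨a, _ | ⟨b, _ | ⟨c, _ | ⟨d, l⟩⟩⟩⟩
  · simp at hs
  · simp_all
  · simp_all
  · simp only [List.isChain_cons_cons, List.isChain_singleton, and_true] at hc
    simp_all [G.eq_v_of_adj_of_adj hc.1 hc.2]
  · simp only [List.isChain_cons_cons] at hc
    have hb := G.eq_v_of_adj_of_adj hc.1 hc.2.1
    have hc' := G.eq_v_of_adj_of_adj hc.2.1 hc.2.2.1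
    subst hb hc'
    exact absurd hc.2.1 G.not_adj_v_v

lemma isDirPath_triple_iff : IsDirPath G.adj s t [s, G.v, t] ↔ (s ∈ G.I ∨ s ∈ G.J) ∧ t ∈ G.T := by
  constructor
  · rintro ⟨hc, -⟩
    replace hc : [s, G.v, t].IsChain G.adj := hc
    simp only [List.isChain_cons_cons, List.isChain_singleton, and_true] at hc
    exact ⟨G.adj_v_iff.1 hc.1, (G.v_out t).1 hc.2⟩
  · rintro ⟨hs, ht⟩
    have hsv : s ≠ G.v := by rintro rfl; exact hs.elim G.v_not_I G.v_not_J
    have hvt : G.v ≠ t := by rintro rfl; exact G.v_not_T ht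
    refine ⟨?_, rfl, rfl, by simp [hsv, hvt, G.ne_of_mem_T hs ht]⟩
    exact List.isChain_cons_cons.2 ⟨G.adj_v_iff.2 hs, List.isChain_pair.2 ((G.v_out t).2 ht)⟩

lemma numShortestThrough_v_div_numShortest [DecidableEq V] [DecidableRel G.adj] (s t : V) :
    (numShortestThrough G.adj s t G.v : ℝ) / numShortest G.adj s t
      = if (s ∈ G.I ∨ s ∈ G.J) ∧ t ∈ G.T ∧ ¬ G.adj s t then 1 else 0 := by
  split_ifs with hst
  · obtain ⟨hs, ht, hna⟩ := hst
    have hpaths : ∀ l, IsDirPath G.adj s t l ↔ l = [s, G.v, t] := by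
      refine fun l => ⟨fun hl => ?_, fun hl => hl ▸ G.isDirPath_triple_iff.2 ⟨hs, ht⟩⟩
      rcases G.isDirPath_cases hl with rfl | rfl | rfl
      · exact absurd (by simpa using hl.2.2.1) (G.ne_of_mem_T hs ht)
      · exact absurd (List.isChain_pair.1 hl.1) hna
      · rfl
    have hσ : numShortest G.adj s t = 1 := by
      rw [numShortest, setOf_isShortestDirPath_eq_singleton hpaths, Set.ncard_singleton]
    rw [numShortestThrough_eq_numShortest, hσ, Nat.cast_one, div_one]
    intro l hl
    rw [(hpaths l).1 hl.1]
    simp [ListInterior]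
  · rw [numShortestThrough_eq_zero, Nat.cast_zero, zero_div]
    rintro l ⟨hl, hmin⟩ hint
    rcases G.isDirPath_cases hl with rfl | rfl | rfl
    · simp [ListInterior] at hint
    · simp [ListInterior] at hint
    · obtain ⟨hs, ht⟩ := G.isDirPath_triple_iff.1 hl
      have hadj : G.adj s t := by_contra fun h => hst ⟨hs, ht, h⟩
      simpa using hmin [s, t] (isDirPath_pair hadj (G.ne_of_mem_T hs ht))

lemma degout_v : G.degout G.v = #G.T := by
  rw [degout, ← Set.ncard_coe_finset]
  exact congrArg Set.ncard (Set.ext G.v_out)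

lemma degout_of_mem_I (hs : s ∈ G.I) : G.degout s = 1 := by
  rw [degout, ← Set.ncard_singleton G.v]
  exact congrArg Set.ncard (Set.ext (G.I_out s hs))

lemma degout_eq_card_filter_adj_add_one [DecidableEq V] [DecidableRel G.adj]
    (hs : s ∈ G.I ∨ s ∈ G.J) : G.degout s = #{t ∈ G.T | G.adj s t} + 1 := by
  have hout : {w | G.adj s w} = ↑(insert G.v {t ∈ G.T | G.adj s t}) := by
    ext w
    simp only [Set.mem_ofPred_eq, coe_insert, coe_filter, Set.mem_insert_iff]
    refine ⟨fun h => (G.eq_v_or_mem_T_of_adj h).imp_right fun hw => ⟨hw, h⟩, ?_⟩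
    rintro (rfl | ⟨-, h⟩)
    exacts [G.adj_v_iff.2 hs, h]
  rw [degout, hout, Set.ncard_coe_finset, card_insert_of_notMem fun h => G.v_not_T (mem_filter.1 h).1]

lemma card_filter_not_adj [DecidableEq V] [DecidableRel G.adj] (hs : s ∈ G.I ∨ s ∈ G.J) :
    (#{t ∈ G.T | ¬ G.adj s t} : ℝ) = #G.T - (G.degout s - 1) := by
  rw [G.degout_eq_card_filter_adj_add_one hs, ← G.T.card_filter_add_card_filter_not (G.adj s)]
  push_cast
  ring

lemma B_eq_sum [Fintype V] [DecidableEq V] [DecidableRel G.adj] :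
    G.B = ∑ s ∈ G.I ∪ G.J, (#{t ∈ G.T | ¬ G.adj s t} : ℝ) := by
  simp only [B, numShortestThrough_v_div_numShortest, ite_and, sum_ite_irrel,
    sum_const_zero, ← mem_union, sum_ite_mem, sum_boole]
  have erase_v_inter {X : Finset V} (hX : G.v ∉ X) : univ.erase G.v ∩ X = X := by
    rw [erase_inter, univ_inter, erase_eq_of_notMem hX]
  rw [erase_v_inter G.v_not_T, erase_v_inter (by simp [G.v_not_I, G.v_not_J])]

lemma B_eq [Fintype V] [DecidableEq V] :
    G.B = G.degout G.v * G.degin - ∑ j ∈ G.J, ((G.degout j : ℝ) - 1) := by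
  classical
  rw [B_eq_sum, sum_congr rfl fun s hs => G.card_filter_not_adj (mem_union.1 hs),
    sum_union G.disj_IJ, sum_congr rfl fun s hs => by rw [G.degout_of_mem_I hs], degout_v, degin]
  simp only [sum_sub_distrib, sum_const, nsmul_eq_mul]
  push_cast
  ring

end CDGraph

theorem cd_nok_normalized_betweenness_formula_general [Fintype V] [DecidableEq V] (G : CDGraph V)
    (h1 : 1 ≤ G.degout G.v) (h2 : 1 ≤ G.degin) :
    G.B / ((G.degout G.v : ℝ) * (G.degin : ℝ))
      = 1 - (∑ j ∈ G.J, ((G.degout j : ℝ) - 1))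
              / ((G.degout G.v : ℝ) * (G.degin : ℝ)) := by
  have hpos : (0 : ℝ) < G.degout G.v * G.degin := by exact_mod_cast Nat.mul_pos h1 h2
  rw [G.B_eq, sub_div, div_self hpos.ne']

/-- In a CD neighborhood graph with `K = ∅`, `degout(v) ≥ 1` and
`degin(v) ≥ 1`, the no-k normalized betweenness `B^nk(v) = B(v)/(degout(v)·degin(v))`
satisfies `B^nk(v) = 1 − (Σ_{j ∈ J} (degout(j) − 1)) / (degout(v)·degin(v))`. -/
theorem cd_nok_normalized_betweenness_formula [Fintype V] [DecidableEq V] (G : CDGraph V)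
    (hK : G.K = ∅) (h1 : 1 ≤ G.degout G.v) (h2 : 1 ≤ G.degin) :
    G.B / ((G.degout G.v : ℝ) * (G.degin : ℝ))
      = 1 - (∑ j ∈ G.J, ((G.degout j : ℝ) - 1))
              / ((G.degout G.v : ℝ) * (G.degin : ℝ)) :=
  cd_nok_normalized_betweenness_formula_general G h1 h2
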